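/- arXiv:0708.2684 — 5 statements merged into one kernel-verified Lean document; each statement's English description precedes it below -/
import Mathlib

section
/- Let a > b > 0 and c = √(a² − b²). For every t ∈ ℝ set ζ(t) = a cos t + i b sin t (a point of the ellipse x²/a² + y²/b² = 1) and s(t) = b cos t + i a sin t. Then s(t)² = ζ(t)² − c² and conj(ζ(t)) = ((a² + b²) ζ(t) − 2ab s(t)) / c². -/
open Complex

noncomputable def ellipsePoint (a b t : ℝ) : ℂ :=
  (a * Real.cos t : ℝ) + (b * Real.sin t : ℝ) * I

theorem conj_ellipsePoint (a b t : ℝ) :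
    starRingEnd ℂ (ellipsePoint a b t) = ellipsePoint a (-b) t := by
  simp only [ellipsePoint, map_add, map_mul, conj_ofReal, conj_I]
  push_cast
  ring

-- The two squares differ by `(a² - b²)(cos² t + sin² t)`.
theorem ellipsePoint_swap_sq (a b t : ℝ) :
    ellipsePoint b a t ^ 2 = ellipsePoint a b t ^ 2 - ((a ^ 2 - b ^ 2 : ℝ) : ℂ) := by
  simp only [ellipsePoint]
  push_cast
  linear_combination ((b : ℂ) ^ 2 - (a : ℂ) ^ 2) * sin_sq_add_cos_sq (t : ℂ)
    + sin (t : ℂ) ^ 2 * ((a : ℂ) ^ 2 - (b : ℂ) ^ 2) * I_sq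

theorem sq_sub_sq_mul_conj_ellipsePoint (a b t : ℝ) :
    ((a ^ 2 - b ^ 2 : ℝ) : ℂ) * starRingEnd ℂ (ellipsePoint a b t)
      = ((a ^ 2 + b ^ 2 : ℝ) : ℂ) * ellipsePoint a b t
        - 2 * (a : ℂ) * (b : ℂ) * ellipsePoint b a t := by
  rw [conj_ellipsePoint]
  simp only [ellipsePoint]
  push_cast
  ring

/-- The Schwarz function of the ellipse with semi-axes `a > b > 0`: along the
parametrization `ζ(t) = a cos t + i b sin t`, the function `s(t) = b cos t + i a sin t`
satisfies `s(t)² = ζ(t)² - c²` and `conj ζ(t) = ((a² + b²) ζ(t) - 2ab s(t)) / c²`. -/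
theorem schwarz_function_ellipse
    (a b : ℝ) (hb : 0 < b) (hab : b < a)
    (c : ℝ) (hc : c = Real.sqrt (a ^ 2 - b ^ 2)) (t : ℝ)
    (ζ s : ℂ)
    (hζ : ζ = (a * Real.cos t : ℝ) + (b * Real.sin t : ℝ) * Complex.I)
    (hs : s = (b * Real.cos t : ℝ) + (a * Real.sin t : ℝ) * Complex.I) :
    s ^ 2 = ζ ^ 2 - (c : ℂ) ^ 2 ∧
    starRingEnd ℂ ζ = (((a ^ 2 + b ^ 2 : ℝ) : ℂ) * ζ - 2 * (a : ℂ) * (b : ℂ) * s)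
      / ((c : ℂ) ^ 2) := by
  have hab_sq : 0 < a ^ 2 - b ^ 2 := by nlinarith
  have hc_sq : (c : ℂ) ^ 2 = ((a ^ 2 - b ^ 2 : ℝ) : ℂ) := by
    rw [hc, ← ofReal_pow, Real.sq_sqrt hab_sq.le]
  rw [hc_sq, show ζ = ellipsePoint a b t from hζ, show s = ellipsePoint b a t from hs]
  refine ⟨ellipsePoint_swap_sq a b t, ?_⟩
  rw [eq_div_iff (ofReal_ne_zero.2 hab_sq.ne'), mul_comm]
  exact sq_sub_sq_mul_conj_ellipsePoint a b t
end

section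
/- Let μ be a finite nonnegative Borel measure on ℂ with compact support K, and let w ∈ ℂ. Let Γ ⊂ ℂ be a compact connected set disjoint from K such that K is contained in a bounded connected component of ℂ \ Γ and every point of Γ belongs to the closure of the unbounded connected component of ℂ \ Γ. Suppose that every z ∈ Γ satisfies conj(z) − conj(w) = ∫ 1/(z − ζ) dμ(ζ). Then Γ ⊆ { z ∈ ℂ : |z − w|² = μ(ℂ) }; in particular Γ lies on a circle centered at w. -/
/-!
Put `g z = (z - w) * C z - μ(ℂ)`, where `C z = ∫ (z - ζ)⁻¹ dμ(ζ)` is the Cauchy transform of `μ`.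
The lens equation says `C z = conj (z - w)` on `Γ`, so there `g z = |z - w|² - μ(ℂ)` is real.
Off `K` the function `g` is holomorphic, and `g z → 0` as `z → ∞`. The unbounded component `Ω`
of `ℂ \ Γ` avoids `K` and has its frontier in `Γ`, so the maximum principle applied to
`exp (∓ i g)` on `Ω` cut off by large balls gives `Im g = 0` on `Ω`. By the open mapping theorem
`g` is then constant on `Ω`, hence `0`, and by continuity `g = 0` on `Γ ⊆ closure Ω`.
-/

open Complex MeasureTheory Metric Filter Bornology Set Topology

noncomputable def cauchyTransform (μ : Measure ℂ) (z : ℂ) : ℂ := ∫ ζ, (z - ζ)⁻¹ ∂μ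

section CauchyTransform

variable {μ : Measure ℂ} [IsFiniteMeasure μ] {K : Set ℂ}

theorem hasDerivAt_cauchyTransform (hK : IsClosed K) (hμK : ∀ᵐ ζ ∂μ, ζ ∈ K) {z : ℂ}
    (hz : z ∉ K) : HasDerivAt (cauchyTransform μ) (∫ ζ, -((z - ζ) ^ 2)⁻¹ ∂μ) z := by
  obtain ⟨ε, hε, hball⟩ := Metric.isOpen_iff.1 hK.isOpen_compl z hz
  have hε₂ : 0 < ε / 2 := half_pos hε
  have hsep : ∀ x ∈ ball z (ε / 2), ∀ ζ ∈ K, ε / 2 ≤ ‖x - ζ‖ := by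
    intro x hx ζ hζ
    have hζz : ε ≤ dist ζ z := not_lt.1 fun h => hball h hζ
    have := dist_triangle ζ x z
    rw [mem_ball] at hx
    rw [← dist_eq_norm, dist_comm]
    linarith
  refine (hasDerivAt_integral_of_dominated_loc_of_deriv_le (μ := μ)
    (F := fun x ζ => (x - ζ)⁻¹) (F' := fun x ζ => -((x - ζ) ^ 2)⁻¹)
    (bound := fun _ => ((ε / 2) ^ 2)⁻¹)
    (ball_mem_nhds z hε₂) (Eventually.of_forall fun x => by fun_prop) ?_ (by fun_prop) ?_
    (integrable_const _) ?_).2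
  · refine Integrable.of_bound (by fun_prop) (ε / 2)⁻¹ ?_
    filter_upwards [hμK] with ζ hζ
    rw [norm_inv]
    exact inv_anti₀ hε₂ (hsep z (mem_ball_self hε₂) ζ hζ)
  · filter_upwards [hμK] with ζ hζ x hx
    rw [norm_neg, norm_inv, norm_pow]
    exact inv_anti₀ (by positivity) (pow_le_pow_left₀ hε₂.le (hsep x hx ζ hζ) 2)
  · filter_upwards [hμK] with ζ hζ x hx
    have hne : x - ζ ≠ 0 := norm_pos_iff.1 (hε₂.trans_le (hsep x hx ζ hζ))
    simpa [neg_div] using ((hasDerivAt_id x).sub_const ζ).fun_inv hne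

theorem differentiableOn_cauchyTransform (hK : IsClosed K) (hμK : ∀ᵐ ζ ∂μ, ζ ∈ K) :
    DifferentiableOn ℂ (cauchyTransform μ) Kᶜ := fun _ hz =>
  (hasDerivAt_cauchyTransform hK hμK hz).differentiableAt.differentiableWithinAt

theorem tendsto_sub_mul_inv_sub_cobounded {𝕜 : Type*} [NormedField 𝕜] (a b : 𝕜) :
    Tendsto (fun z => (z - a) * (z - b)⁻¹) (cobounded 𝕜) (𝓝 1) := by
  have : Tendsto (fun z => 1 + (b - a) * (z - b)⁻¹) (cobounded 𝕜) (𝓝 1) := by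
    simpa using tendsto_const_nhds.add
      ((tendsto_inv₀_cobounded.comp (tendsto_sub_const_cobounded b)).const_mul (b - a))
  refine this.congr' ?_
  filter_upwards [eventually_ne_cobounded b] with z hz
  field_simp [sub_ne_zero.2 hz]
  ring

theorem norm_sub_mul_inv_sub_le_two {𝕜 : Type*} [NormedField 𝕜] {a b z : 𝕜} {R : ℝ}
    (hb : ‖b‖ ≤ R) (hz : 2 * R + ‖a‖ ≤ ‖z‖) : ‖(z - a) * (z - b)⁻¹‖ ≤ 2 := by
  rw [norm_mul, norm_inv, ← div_eq_mul_inv]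
  refine div_le_of_le_mul₀ (norm_nonneg _) zero_le_two ?_
  linarith [norm_sub_le z a, norm_sub_norm_le z b]

theorem tendsto_sub_mul_cauchyTransform (hK : IsBounded K) (hμK : ∀ᵐ ζ ∂μ, ζ ∈ K) (w : ℂ) :
    Tendsto (fun z => (z - w) * cauchyTransform μ z) (cobounded ℂ) (𝓝 (μ.real univ)) := by
  obtain ⟨R, hR⟩ := hK.subset_closedBall 0
  have : (cobounded ℂ).IsCountablyGenerated := comap_norm_atTop (E := ℂ) ▸ inferInstance
  have := tendsto_integral_filter_of_dominated_convergence (μ := μ) (fun _ => (2 : ℝ))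
    (F := fun z ζ => (z - w) * (z - ζ)⁻¹) (f := fun _ => 1)
    (Eventually.of_forall fun z => by fun_prop) ?_ (integrable_const _)
    (Eventually.of_forall fun ζ => tendsto_sub_mul_inv_sub_cobounded w ζ)
  · simpa [cauchyTransform, integral_const_mul] using this
  · filter_upwards [tendsto_norm_cobounded_atTop.eventually_ge_atTop (2 * R + ‖w‖)] with z hz
    filter_upwards [hμK] with ζ hζ
    exact norm_sub_mul_inv_sub_le_two (mem_closedBall_zero_iff.1 (hR hζ)) hz

end CauchyTransform

theorem IsClosed.frontier_connectedComponentIn_compl_subset {X : Type*} [TopologicalSpace X]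
    [LocallyConnectedSpace X] {F : Set X} (hF : IsClosed F) (x : X) :
    frontier (connectedComponentIn Fᶜ x) ⊆ F := by
  intro p hp
  by_contra hpF
  have hopen : ∀ q, IsOpen (connectedComponentIn Fᶜ q) := fun q =>
    hF.isOpen_compl.connectedComponentIn
  rw [(hopen x).frontier_eq] at hp
  obtain ⟨q, hqp, hqx⟩ := mem_closure_iff.1 hp.1 _ (hopen p) (mem_connectedComponentIn hpF)
  apply hp.2
  rw [connectedComponentIn_eq hqx, ← connectedComponentIn_eq hqp]
  exact mem_connectedComponentIn hpF

section MaximumPrinciple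

variable {E F : Type*} [NormedAddCommGroup E] [NormedSpace ℂ E] [Nontrivial E]
  [NormedAddCommGroup F] [NormedSpace ℂ F]

theorem norm_le_of_forall_mem_frontier_norm_le_of_cobounded {f : E → F} {U : Set E}
    (hd : DiffContOnCl ℂ f U) {C : ℝ} (hC : ∀ z ∈ frontier U, ‖f z‖ ≤ C)
    (hinf : ∀ C' > C, ∀ᶠ z in cobounded E, ‖f z‖ ≤ C') {z : E} (hz : z ∈ closure U) :
    ‖f z‖ ≤ C := by
  refine le_of_forall_gt_imp_ge_of_dense fun C' hC' => ?_
  obtain ⟨R, -, hR⟩ := hasBasis_cobounded_norm.eventually_iff.1 (hinf C' hC')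
  set V := ball 0 (max R ‖z‖ + 1) ∩ U
  refine norm_le_of_forall_mem_frontier_norm_le (U := V)
    (isBounded_ball.subset inter_subset_left) (hd.mono inter_subset_right) (fun p hp => ?_)
    (isOpen_ball.inter_closure ⟨?_, hz⟩)
  · rcases frontier_inter_subset _ _ hp with ⟨hpS, -⟩ | ⟨-, hpU⟩
    · refine hR (show R ≤ ‖p‖ from ?_)
      rw [mem_sphere_zero_iff_norm.1 (frontier_ball_subset_sphere hpS)]
      linarith [le_max_left R ‖z‖]
    · exact (hC p hpU).trans hC'.le
  · rw [mem_ball_zero_iff]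
    linarith [le_max_right R ‖z‖]

theorem DiffContOnCl.im_nonpos_of_forall_mem_frontier_im_nonpos {g : E → ℂ} {U : Set E}
    (hd : DiffContOnCl ℂ g U) (hfr : ∀ z ∈ frontier U, (g z).im ≤ 0)
    (hlim : Tendsto (fun z => (g z).im) (cobounded E) (𝓝 0)) {z : E} (hz : z ∈ closure U) :
    (g z).im ≤ 0 := by
  have hnorm : ∀ z, ‖cexp (-I * g z)‖ = Real.exp (g z).im := fun z => by
    simp [Complex.norm_exp]
  have hexp : Tendsto (fun z => ‖cexp (-I * g z)‖) (cobounded E) (𝓝 1) := by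
    simp_rw [hnorm]
    simpa [Function.comp_def] using (Real.continuous_exp.tendsto 0).comp hlim
  have hf : DiffContOnCl ℂ (fun z => cexp (-I * g z)) U :=
    differentiable_exp.comp_diffContOnCl (hd.const_smul (-I))
  have := norm_le_of_forall_mem_frontier_norm_le_of_cobounded hf
    (fun p hp => (hnorm p).trans_le (Real.exp_le_one_iff.2 (hfr p hp)))
    (fun C' hC' => hexp.eventually (ge_mem_nhds hC')) hz
  exact Real.exp_le_one_iff.1 ((hnorm z).symm.trans_le this)

end MaximumPrinciple

theorem AnalyticOnNhd.exists_eq_const_of_im_eq_zero {E : Type*} [NormedAddCommGroup E]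
    [NormedSpace ℂ E] {g : E → ℂ} {U : Set E} (hg : AnalyticOnNhd ℂ g U) (hU : IsOpen U)
    (hUc : IsPreconnected U) (him : ∀ z ∈ U, (g z).im = 0) : ∃ c, ∀ z ∈ U, g z = c := by
  obtain rfl | ⟨z, hz⟩ := U.eq_empty_or_nonempty
  · exact ⟨0, by simp⟩
  refine (hg.is_constant_or_isOpen hUc).resolve_right fun hopen => ?_
  have hne : (im '' (g '' U)).Nonempty := ⟨_, _, ⟨z, hz, rfl⟩, rfl⟩
  have : im '' (g '' U) = {0} :=
    hne.subset_singleton_iff.1 (by rintro _ ⟨_, ⟨x, hx, rfl⟩, rfl⟩; exact him x hx)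
  exact not_isOpen_singleton (0 : ℝ) (this ▸ isOpenMap_im _ (hopen U subset_rfl hU))

theorem DiffContOnCl.eqOn_zero_of_forall_mem_frontier_im_eq_zero {g : ℂ → ℂ} {U : Set ℂ}
    (hd : DiffContOnCl ℂ g U) (hU : IsOpen U) (hUc : IsPreconnected U) (hUb : ¬IsBounded U)
    (hfr : ∀ z ∈ frontier U, (g z).im = 0) (hlim : Tendsto g (cobounded ℂ) (𝓝 0)) :
    EqOn g 0 (closure U) := by
  have hlim_im : Tendsto (fun z => (g z).im) (cobounded ℂ) (𝓝 0) := by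
    simpa [Function.comp_def] using (continuous_im.tendsto 0).comp hlim
  have him : ∀ z ∈ U, (g z).im = 0 := fun z hz => by
    refine le_antisymm (hd.im_nonpos_of_forall_mem_frontier_im_nonpos
      (fun p hp => (hfr p hp).le) hlim_im (subset_closure hz)) ?_
    simpa using hd.neg.im_nonpos_of_forall_mem_frontier_im_nonpos
      (fun p hp => by simp [hfr p hp]) (by simpa using hlim_im.neg) (subset_closure hz)
  obtain ⟨c, hc⟩ :=
    (hd.differentiableOn.analyticOnNhd hU).exists_eq_const_of_im_eq_zero hU hUc him
  have : (cobounded ℂ ⊓ 𝓟 U).NeBot := inf_principal_neBot_iff.2 fun A hA =>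
    not_not.1 fun hAU => hUb <| isBounded_def.2 <|
      mem_of_superset hA fun x hxA hxU => hAU ⟨x, hxA, hxU⟩
  have hc_lim : Tendsto g (cobounded ℂ ⊓ 𝓟 U) (𝓝 c) := tendsto_const_nhds.congr' <|
    eventually_inf_principal.2 <| .of_forall fun z hz => (hc z hz).symm
  have hc0 : c = 0 := tendsto_nhds_unique hc_lim (hlim.mono_left inf_le_left)
  subst hc0
  exact EqOn.of_subset_closure hc hd.continuousOn continuousOn_const subset_closure subset_rfl

theorem einstein_ring_is_circle_general
    (μ : Measure ℂ) (hfinμ : IsFiniteMeasure μ)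
    (K : Set ℂ) (hKcpt : IsCompact K) (hKsupp : μ Kᶜ = 0) (w : ℂ)
    (Γ : Set ℂ) (hΓcpt : IsCompact Γ)
    (hdisj : Disjoint Γ K)
    (hKin : ∃ x : ℂ, x ∉ Γ ∧ K ⊆ connectedComponentIn Γᶜ x ∧
      Bornology.IsBounded (connectedComponentIn Γᶜ x))
    (hΓout : ∃ y : ℂ, y ∉ Γ ∧ ¬ Bornology.IsBounded (connectedComponentIn Γᶜ y) ∧
      Γ ⊆ closure (connectedComponentIn Γᶜ y))
    (hlens : ∀ z ∈ Γ, starRingEnd ℂ z - starRingEnd ℂ w = ∫ ζ, (z - ζ)⁻¹ ∂μ) :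
    Γ ⊆ {z : ℂ | ‖z - w‖ ^ 2 = (μ Set.univ).toReal} := by
  obtain ⟨x, -, hKx, hx_bdd⟩ := hKin
  obtain ⟨y, -, hy_unbdd, hΓ_cl⟩ := hΓout
  have hμK : ∀ᵐ ζ ∂μ, ζ ∈ K := ae_iff.2 hKsupp
  have hfr : frontier (connectedComponentIn Γᶜ y) ⊆ Γ :=
    hΓcpt.isClosed.frontier_connectedComponentIn_compl_subset y
  have hK_cl : closure (connectedComponentIn Γᶜ y) ⊆ Kᶜ := by
    rw [closure_eq_self_union_frontier]
    rintro p (hpy | hpΓ) hpK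
    · apply hy_unbdd
      rwa [connectedComponentIn_eq hpy, ← connectedComponentIn_eq (hKx hpK)]
    · exact disjoint_left.1 hdisj (hfr hpΓ) hpK
  set g : ℂ → ℂ := fun z => (z - w) * cauchyTransform μ z - μ.real univ
  have hg_Γ : ∀ z ∈ Γ, g z = ((‖z - w‖ ^ 2 - μ.real univ : ℝ) : ℂ) := fun z hz => by
    simp only [g, cauchyTransform, ← hlens z hz, ← map_sub, mul_conj, normSq_eq_norm_sq,
      ofReal_sub]
  have hg_diff : DifferentiableOn ℂ g Kᶜ :=
    ((differentiableOn_id.sub_const w).mul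
      (differentiableOn_cauchyTransform hKcpt.isClosed hμK)).sub_const _
  have hg_lim : Tendsto g (cobounded ℂ) (𝓝 0) := by
    simpa [g] using (tendsto_sub_mul_cauchyTransform hKcpt.isBounded hμK w).sub_const
      (μ.real univ : ℂ)
  have hg_zero : EqOn g 0 (closure (connectedComponentIn Γᶜ y)) :=
    (hg_diff.mono hK_cl).diffContOnCl.eqOn_zero_of_forall_mem_frontier_im_eq_zero
      hΓcpt.isClosed.isOpen_compl.connectedComponentIn isPreconnected_connectedComponentIn
      hy_unbdd (fun z hz => by rw [hg_Γ z (hfr hz), ofReal_im]) hg_lim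
  intro z hz
  have := hg_zero (hΓ_cl hz)
  rwa [Pi.zero_apply, hg_Γ z hz, ofReal_eq_zero, sub_eq_zero] at this

/-- Einstein rings without shear are circles: if a compactly supported mass
distribution produces a whole image curve `Γ` surrounding the mass, then `Γ` lies on
a circle centered at the source `w`, of radius squared equal to the total mass. -/
theorem einstein_ring_is_circle
    (μ : Measure ℂ) (hfinμ : IsFiniteMeasure μ)
    (K : Set ℂ) (hKcpt : IsCompact K) (hKsupp : μ Kᶜ = 0) (w : ℂ)
    (Γ : Set ℂ) (hΓcpt : IsCompact Γ) (hΓconn : IsConnected Γ)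
    (hdisj : Disjoint Γ K)
    (hKin : ∃ x : ℂ, x ∉ Γ ∧ K ⊆ connectedComponentIn Γᶜ x ∧
      Bornology.IsBounded (connectedComponentIn Γᶜ x))
    (hΓout : ∃ y : ℂ, y ∉ Γ ∧ ¬ Bornology.IsBounded (connectedComponentIn Γᶜ y) ∧
      Γ ⊆ closure (connectedComponentIn Γᶜ y))
    (hlens : ∀ z ∈ Γ, starRingEnd ℂ z - starRingEnd ℂ w = ∫ ζ, (z - ζ)⁻¹ ∂μ) :
    Γ ⊆ {z : ℂ | ‖z - w‖ ^ 2 = (μ Set.univ).toReal} :=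
  einstein_ring_is_circle_general μ hfinμ K hKcpt hKsupp w Γ hΓcpt hdisj hKin hΓout hlens
end

section
/- Let z₀ ∈ ℂ, R > 0, and let φ : ℝ → ℝ be measurable and such that ζ ↦ φ(|ζ − z₀|) is integrable on the disk D = { ζ : |ζ − z₀| < R }. Then for every z ∈ ℂ with |z − z₀| > R, ∫_D φ(|ζ − z₀|)/(z − ζ) dA(ζ) = M/(z − z₀), where M = ∫_D φ(|ζ − z₀|) dA(ζ) is the total mass. -/
/-!
Expand the Cauchy kernel in a geometric series about the centre: for `|ζ - z₀| < |z - z₀|`,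
`1 / (z - ζ) = ∑ₙ (ζ - z₀)ⁿ / (z - z₀)ⁿ⁺¹`, and the series converges uniformly on the disk, so it
may be integrated term by term against the density. A radial density is invariant under rotation
about `z₀` while `(ζ - z₀)ⁿ` is not for `n ≥ 1`, so every moment but the zeroth vanishes, leaving
the total mass divided by `z - z₀`.
-/

open Complex MeasureTheory

theorem hasSum_pow_div_pow_succ_inv_sub {w z₀ z : ℂ} (h : ‖w - z₀‖ < ‖z - z₀‖) :
    HasSum (fun n : ℕ => (w - z₀) ^ n / (z - z₀) ^ (n + 1)) (z - w)⁻¹ := by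
  have ha : z - z₀ ≠ 0 := norm_pos_iff.mp ((norm_nonneg _).trans_lt h)
  have hq : ‖(w - z₀) / (z - z₀)‖ < 1 := by
    rwa [norm_div, div_lt_one (norm_pos_iff.mpr ha)]
  have hterm : ∀ n : ℕ,
      (z - z₀)⁻¹ * ((w - z₀) / (z - z₀)) ^ n = (w - z₀) ^ n / (z - z₀) ^ (n + 1) := by
    intro n
    rw [div_pow, pow_succ]
    field_simp
  have hsum : (z - z₀)⁻¹ * (1 - (w - z₀) / (z - z₀))⁻¹ = (z - w)⁻¹ := by
    rw [← mul_inv, mul_one_sub, mul_div_cancel₀ _ ha, sub_sub_sub_cancel_right]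
  simpa only [hterm, hsum] using (hasSum_geometric_of_norm_lt_one hq).mul_left (z - z₀)⁻¹

theorem hasSum_integral_div_sub {μ : Measure ℂ} {f : ℂ → ℂ} (hf : Integrable f μ)
    {z₀ z : ℂ} {r : ℝ} (hμ : ∀ᵐ ζ ∂μ, ‖ζ - z₀‖ ≤ r) (hr₀ : 0 ≤ r) (hr : r < ‖z - z₀‖) :
    HasSum (fun n : ℕ => (∫ ζ, f ζ * (ζ - z₀) ^ n ∂μ) / (z - z₀) ^ (n + 1))
      (∫ ζ, f ζ / (z - ζ) ∂μ) := by
  set F : ℕ → ℂ → ℂ := fun n ζ => f ζ * ((ζ - z₀) ^ n / (z - z₀) ^ (n + 1))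
  have hpow : ∀ n, ∀ᵐ ζ ∂μ, ‖(ζ - z₀) ^ n / (z - z₀) ^ (n + 1)‖ ≤ r ^ n / ‖z - z₀‖ ^ (n + 1) := by
    intro n
    filter_upwards [hμ] with ζ hζ
    rw [norm_div, norm_pow, norm_pow]
    gcongr
  have hF_int : ∀ n, Integrable (F n) μ := fun n =>
    hf.mul_bdd (by fun_prop) (hpow n)
  have hF_norm : ∀ n, ∫ ζ, ‖F n ζ‖ ∂μ ≤ (∫ ζ, ‖f ζ‖ ∂μ) * (r ^ n / ‖z - z₀‖ ^ (n + 1)) := by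
    intro n
    rw [← integral_mul_const]
    refine integral_mono_of_nonneg (.of_forall fun ζ => norm_nonneg _) (hf.norm.mul_const _) ?_
    filter_upwards [hpow n] with ζ hζ
    rw [norm_mul]
    gcongr
  have hgeom : Summable fun n : ℕ => (∫ ζ, ‖f ζ‖ ∂μ) * (r ^ n / ‖z - z₀‖ ^ (n + 1)) := by
    have hpos : 0 < ‖z - z₀‖ := hr₀.trans_lt hr
    refine ((summable_geometric_of_lt_one (div_nonneg hr₀ hpos.le)
      ((div_lt_one hpos).mpr hr)).mul_left ((∫ ζ, ‖f ζ‖ ∂μ) / ‖z - z₀‖)).congr fun n => ?_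
    rw [div_pow, pow_succ]
    field_simp
  have hsum := hasSum_integral_of_summable_integral_norm hF_int
    (hgeom.of_nonneg_of_le (fun n => integral_nonneg fun ζ => norm_nonneg _) hF_norm)
  have hint : ∀ n, ∫ ζ, F n ζ ∂μ = (∫ ζ, f ζ * (ζ - z₀) ^ n ∂μ) / (z - z₀) ^ (n + 1) := by
    intro n
    simp only [F, mul_div_assoc', integral_div]
  have htsum : ∫ ζ, ∑' n, F n ζ ∂μ = ∫ ζ, f ζ / (z - ζ) ∂μ := by
    refine integral_congr_ae ?_
    filter_upwards [hμ] with ζ hζ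
    rw [div_eq_mul_inv, ((hasSum_pow_div_pow_succ_inv_sub (hζ.trans_lt hr)).mul_left (f ζ)).tsum_eq]
  simpa only [hint, htsum] using hsum

theorem integral_radial_mul_pow_eq_zero (ψ : ℝ → ℂ) {n : ℕ} (hn : n ≠ 0) :
    ∫ w : ℂ, ψ ‖w‖ * w ^ n = 0 := by
  -- rotating by `c` with `c ^ n = -1` preserves the integral and negates it
  set c := Circle.exp (Real.pi / n)
  have hc : (c : ℂ) ^ n = -1 := by
    rw [Circle.coe_exp, ← Complex.exp_nat_mul]
    push_cast
    field_simp
    exact Complex.exp_pi_mul_I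
  have hrot := (rotation c).measurePreserving.integral_comp
    (rotation c).toHomeomorph.measurableEmbedding (fun w : ℂ => ψ ‖w‖ * w ^ n)
  simp only [rotation_apply, norm_mul, Circle.norm_coe, one_mul, mul_pow, hc] at hrot
  simp only [neg_one_mul, mul_neg, integral_neg] at hrot
  exact self_eq_neg.mp hrot.symm

theorem setIntegral_ball_radial_mul_pow_eq_zero (z₀ : ℂ) (R : ℝ) (φ : ℝ → ℂ) {n : ℕ}
    (hn : n ≠ 0) : ∫ ζ in Metric.ball z₀ R, φ ‖ζ - z₀‖ * (ζ - z₀) ^ n = 0 := by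
  calc ∫ ζ in Metric.ball z₀ R, φ ‖ζ - z₀‖ * (ζ - z₀) ^ n
      = ∫ ζ, (Set.Iio R).indicator φ ‖ζ - z₀‖ * (ζ - z₀) ^ n := by
        rw [← integral_indicator measurableSet_ball]
        congr 1
        ext ζ
        by_cases hζ : ‖ζ - z₀‖ < R <;> simp [Set.indicator, dist_eq_norm, hζ]
    _ = ∫ w, (Set.Iio R).indicator φ ‖w‖ * w ^ n :=
        integral_sub_right_eq_self (fun w => (Set.Iio R).indicator φ ‖w‖ * w ^ n) z₀
    _ = 0 := integral_radial_mul_pow_eq_zero _ hn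

theorem cauchy_transform_radial_density_general
    (z₀ : ℂ) (R : ℝ) (hR : 0 < R) (φ : ℝ → ℝ)
    (hinteg : IntegrableOn (fun ζ : ℂ => φ ‖ζ - z₀‖) (Metric.ball z₀ R))
    (z : ℂ) (hz : R < ‖z - z₀‖) :
    ∫ ζ in Metric.ball z₀ R, (φ ‖ζ - z₀‖ : ℂ) / (z - ζ)
      = ((∫ ζ in Metric.ball z₀ R, φ ‖ζ - z₀‖ : ℝ) : ℂ) / (z - z₀) := by
  have hsupp : ∀ᵐ ζ ∂volume.restrict (Metric.ball z₀ R), ‖ζ - z₀‖ ≤ R := by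
    filter_upwards [ae_restrict_mem measurableSet_ball] with ζ hζ
    exact (mem_ball_iff_norm.mp hζ).le
  have hexp := hasSum_integral_div_sub (f := fun ζ => (φ ‖ζ - z₀‖ : ℂ)) hinteg.ofReal hsupp hR.le hz
  rw [← hexp.tsum_eq, tsum_eq_single 0 fun n hn => by
    simp only [setIntegral_ball_radial_mul_pow_eq_zero z₀ R (fun r => (φ r : ℂ)) hn, zero_div]]
  simp [integral_complex_ofReal]

/-- Planar Newton's theorem: the Cauchy transform of a radially symmetric mass density
supported in a disk, evaluated outside the disk, equals the Cauchy kernel of a point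
mass at the center carrying the total mass. -/
theorem cauchy_transform_radial_density
    (z₀ : ℂ) (R : ℝ) (hR : 0 < R) (φ : ℝ → ℝ) (hmeas : Measurable φ)
    (hinteg : IntegrableOn (fun ζ : ℂ => φ ‖ζ - z₀‖) (Metric.ball z₀ R))
    (z : ℂ) (hz : R < ‖z - z₀‖) :
    ∫ ζ in Metric.ball z₀ R, (φ ‖ζ - z₀‖ : ℂ) / (z - ζ)
      = ((∫ ζ in Metric.ball z₀ R, φ ‖ζ - z₀‖ : ℝ) : ℂ) / (z - z₀) :=
  cauchy_transform_radial_density_general z₀ R hR φ hinteg z hz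
end

section
/- (Chang–Refsdal lens.) Let c > 0 and γ be real numbers and w ∈ ℂ. Consider the set S = { z ∈ ℂ : z ≠ 0 and z − c/conj(z) − γ conj(z) = w }. If S is finite, then S has at most 4 elements. -/
open Complex ComplexConjugate Polynomial

/-!
Writing `u = conj z`, the lens equation and its complex conjugate, cleared of denominators, are
two polynomial relations in `z` and `u`. Eliminating `u` leaves a quartic in `z` whose
coefficients depend only on `c`, `γ`, `w`, so every image is a root of it. The quartic vanishes
identically only when `γ = w = 0`, and then every point of the circle `|z|² = c` is an image,
so the set of images is infinite.
-/

noncomputable def changRefsdalPoly (c γ : ℝ) (w : ℂ) : ℂ[X] :=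
  C ((γ : ℂ) - γ ^ 3) * X ^ 4 + C (conj w - 2 * (γ : ℂ) ^ 2 * conj w - γ * w) * X ^ 3
    + C (-(w * conj w) - (γ : ℂ) * conj w ^ 2 - 2 * (γ : ℂ) ^ 2 * c) * X ^ 2
    + C (-((c : ℂ) * (w + 2 * γ * conj w))) * X + C (-((γ : ℂ) * c ^ 2))

section ChangRefsdalPoly

variable (c γ : ℝ) (w : ℂ)

theorem changRefsdalPoly_natDegree_le : (changRefsdalPoly c γ w).natDegree ≤ 4 := by
  unfold changRefsdalPoly
  compute_degree

theorem changRefsdalPoly_coeff_zero : (changRefsdalPoly c γ w).coeff 0 = -(γ * c ^ 2) := by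
  simp only [changRefsdalPoly, coeff_add, coeff_C_mul, coeff_X_pow, coeff_X, coeff_C]
  norm_num

theorem changRefsdalPoly_coeff_one :
    (changRefsdalPoly c γ w).coeff 1 = -(c * (w + 2 * γ * conj w)) := by
  simp only [changRefsdalPoly, coeff_add, coeff_C_mul, coeff_X_pow, coeff_X, coeff_C]
  norm_num

variable {c γ w}

theorem changRefsdalPoly_ne_zero (hc : c ≠ 0) (h : γ ≠ 0 ∨ w ≠ 0) :
    changRefsdalPoly c γ w ≠ 0 := by
  intro hp
  have hγ : γ = 0 := by
    simpa [changRefsdalPoly_coeff_zero, hc] using congrArg (coeff · 0) hp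
  have hw : w = 0 := by
    simpa [hc, hγ, changRefsdalPoly_coeff_one] using congrArg (coeff · 1) hp
  exact h.elim (· hγ) (· hw)

theorem changRefsdalPoly_isRoot {z : ℂ} (hz : z ≠ 0)
    (h : z - c / conj z - γ * conj z = w) : (changRefsdalPoly c γ w).IsRoot z := by
  have hz' : conj z ≠ 0 := (_root_.map_ne_zero _).2 hz
  have hconj : conj z - c / z - γ * z = conj w := by
    simpa using congrArg conj h
  have hE1 : z * conj z - c - γ * conj z ^ 2 - w * conj z = 0 := by
    field_simp at h
    linear_combination h
  have hE2 : conj z * z - c - γ * z ^ 2 - conj w * z = 0 := by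
    field_simp at hconj
    linear_combination hconj
  simp only [changRefsdalPoly, IsRoot, eval_add, eval_mul, eval_pow, eval_C, eval_X]
  -- `hE2` expresses `z * conj z` in terms of `z` alone, which eliminates `conj z` from `hE1`.
  linear_combination z ^ 2 * hE1
    - (z ^ 2 - γ * ((γ * z ^ 2 + conj w * z + c) + z * conj z) - w * z) * hE2

end ChangRefsdalPoly

theorem Complex.sphere_infinite (x : ℂ) {r : ℝ} (hr : 0 < r) :
    (Metric.sphere x r).Infinite := by
  refine (isConnected_sphere (by simp [rank_real_complex]) x hr.le).isPreconnected
    |>.infinite_of_nontrivial ⟨x + r, ?_, x - r, ?_, ?_⟩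
  · simp [hr.le]
  · simp [hr.le]
  · intro h
    have : (r : ℂ) = 0 := by linear_combination h / 2
    exact hr.ne' (by exact_mod_cast this)

theorem sub_div_conj_eq_zero_of_norm_sq_eq {c : ℝ} {z : ℂ} (hz : ‖z‖ ^ 2 = c) :
    z - c / conj z = 0 := by
  rcases eq_or_ne z 0 with rfl | hz0
  · simp
  rw [← hz, ofReal_pow, ← mul_conj', mul_div_cancel_right₀ _ ((_root_.map_ne_zero _).2 hz0),
    sub_self]

/-- The Chang–Refsdal lens equation `z - c/conj z - γ conj z = w` has at most 4
solutions, whenever its solution set is finite. -/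
theorem chang_refsdal_at_most_four_images
    (c γ : ℝ) (hc : 0 < c) (w : ℂ)
    (S : Set ℂ)
    (hS : S = {z : ℂ | z ≠ 0 ∧
      z - (c : ℂ) / starRingEnd ℂ z - (γ : ℂ) * starRingEnd ℂ z = w})
    (hfin : S.Finite) :
    S.ncard ≤ 4 := by
  subst hS
  by_cases hγw : γ = 0 ∧ w = 0
  · obtain ⟨rfl, rfl⟩ := hγw
    refine absurd hfin ((Complex.sphere_infinite 0 (Real.sqrt_pos.2 hc)).mono fun z hz => ?_)
    have hz2 : ‖z‖ ^ 2 = c := by rw [mem_sphere_zero_iff_norm.1 hz, Real.sq_sqrt hc.le]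
    exact ⟨ne_zero_of_mem_sphere (Real.sqrt_pos.2 hc).ne' ⟨z, hz⟩,
      by simpa using sub_div_conj_eq_zero_of_norm_sq_eq hz2⟩
  · have hp := changRefsdalPoly_ne_zero hc.ne' (not_and_or.1 hγw)
    calc _ ≤ ((changRefsdalPoly c γ w).rootSet ℂ).ncard :=
          Set.ncard_le_ncard (fun z hz => (mem_rootSet_of_ne hp).2 <| by
            simpa using changRefsdalPoly_isRoot hz.1 hz.2) (rootSet_finite _ _)
      _ ≤ (changRefsdalPoly c γ w).natDegree := ncard_rootSet_le _ _
      _ ≤ 4 := changRefsdalPoly_natDegree_le c γ w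
end

section
/- Let c be a real number and let w ∈ ℂ with w ≠ 0. Then the set { z ∈ ℂ : 0 < |z| < 1 and conj(z) − (c/z)·|z| = conj(w) } has at most 2 elements. -/
open Complex

/-!
Multiplying the lens equation `conj z - (c / z)|z| = conj w` by `z` gives
`|z| (|z| - c) = z conj w`. Taking norms yields `||z| - c| = |w|`, so `|z| = c ± |w|`,
and the same identity recovers `z` from `|z|` as `|z| (|z| - c) / conj w`.
-/

namespace IsothermalLens

noncomputable def imageOfRadius (c : ℝ) (w : ℂ) (r : ℝ) : ℂ :=
  ((r * (r - c) : ℝ) : ℂ) / starRingEnd ℂ w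

variable {c : ℝ} {w z : ℂ}

lemma norm_mul_norm_sub_eq_mul_conj (hz : z ≠ 0)
    (h : starRingEnd ℂ z - ((c : ℂ) / z) * (‖z‖ : ℂ) = starRingEnd ℂ w) :
    ((‖z‖ * (‖z‖ - c) : ℝ) : ℂ) = z * starRingEnd ℂ w := by
  rw [← h, mul_sub z, ← mul_assoc, mul_div_cancel₀ _ hz, mul_conj']
  push_cast
  ring

lemma abs_norm_sub_eq_norm (hz : z ≠ 0)
    (h : starRingEnd ℂ z - ((c : ℂ) / z) * (‖z‖ : ℂ) = starRingEnd ℂ w) :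
    |‖z‖ - c| = ‖w‖ := by
  have key := congrArg norm (norm_mul_norm_sub_eq_mul_conj hz h)
  rw [norm_real, Real.norm_eq_abs, abs_mul, abs_norm, norm_mul, norm_conj] at key
  exact mul_left_cancel₀ (norm_ne_zero_iff.mpr hz) key

lemma eq_imageOfRadius_norm (hw : w ≠ 0) (hz : z ≠ 0)
    (h : starRingEnd ℂ z - ((c : ℂ) / z) * (‖z‖ : ℂ) = starRingEnd ℂ w) :
    z = imageOfRadius c w ‖z‖ := by
  rw [imageOfRadius, norm_mul_norm_sub_eq_mul_conj hz h,
    mul_div_cancel_right₀ _ ((map_ne_zero _).mpr hw)]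

end IsothermalLens

open IsothermalLens in
/-- For the isothermal density on the unit disk, the shear-free lens equation inside
the disk, `conj z - (c/z)|z| = conj w`, has at most two solutions with `0 < |z| < 1`. -/
theorem isothermal_disk_at_most_two_dim_images
    (c : ℝ) (w : ℂ) (hw : w ≠ 0) :
    ∃ u v : ℂ, {z : ℂ | 0 < ‖z‖ ∧ ‖z‖ < 1 ∧
      starRingEnd ℂ z - ((c : ℂ) / z) * (‖z‖ : ℂ) = starRingEnd ℂ w}
      ⊆ {u, v} := by
  refine ⟨imageOfRadius c w (c + ‖w‖), imageOfRadius c w (c - ‖w‖), ?_⟩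
  rintro z ⟨hz, -, h⟩
  have hz : z ≠ 0 := norm_pos_iff.mp hz
  rw [Set.mem_insert_iff, Set.mem_singleton_iff, eq_imageOfRadius_norm hw hz h]
  rcases abs_eq (norm_nonneg w) |>.mp (abs_norm_sub_eq_norm hz h) with hr | hr
  · left
    congr 1
    linarith
  · right
    congr 1
    linarith
end
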